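/- arXiv:2510.21653 — 3 statements merged into one kernel-verified Lean document; each statement's English description precedes it below -/
import Mathlib

section
/- Let x_1, ..., x_k be nonzero real numbers with pairwise distinct ratios avoiding poles, d_1, ..., d_k nonnegative integers, and ε ≠ 0. Then ∏_{b=1}^{k} ∏_{c=1}^{k} Γ((x_c/ε + d_c) − (x_b/ε + d_b) + 1) / Γ(x_c/ε − x_b/ε + 1) = (−1)^{(k+1)(d_1+...+d_k)} · ∏_{1 ≤ i < j ≤ k} ((x_i/ε + d_i) − (x_j/ε + d_j)) / (x_i/ε − x_j/ε), whenever all Gamma factors are defined and nonzero. -/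
open Finset

private lemma gamma_shift4 (z : ℝ) (hz : ∀ m : ℤ, z ≠ m) (n : ℕ) :
    Real.Gamma (z + n + 1) = Real.Gamma (z + 1) * ∏ j ∈ Finset.range n, (z + 1 + j) := by
  induction n with
  | zero => simp
  | succ n ih =>
    have hne : z + n + 1 ≠ 0 := by
      intro h
      exact hz (-(n+1)) (by push_cast; linarith)
    have h2 : Real.Gamma (z + (n+1) + 1) = (z + n + 1) * Real.Gamma (z + n + 1) := by
      rw [show z + ((n:ℝ)+1) + 1 = (z + n + 1) + 1 by ring, Real.Gamma_add_one hne]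
    push_cast
    rw [h2, ih, Finset.prod_range_succ]
    ring

private lemma reflect_prod4 (z : ℝ) (n : ℕ) :
    ∏ j ∈ Finset.range n, (z + j) = (-1)^n * ∏ j ∈ Finset.range n, (-z - n + 1 + j) := by
  induction n with
  | zero => simp
  | succ n ih =>
    rw [Finset.prod_range_succ, ih, Finset.prod_range_succ']
    push_cast
    have h : ∀ j ∈ Finset.range n, -z - ((n:ℝ)+1) + 1 + ((j:ℝ)+1) = -z - ↑n + 1 + ↑j :=
      fun j _ => by ring
    rw [Finset.prod_congr rfl h]
    ring

private lemma pair_nat4 (z : ℝ) (hz : ∀ m : ℤ, z ≠ m) (n : ℕ) :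
    Real.Gamma (z + n + 1) / Real.Gamma (z + 1) *
      (Real.Gamma (-z - n + 1) / Real.Gamma (-z + 1)) = (-1)^n * ((z + n) / z) := by
  have hz0 : z ≠ 0 := fun h => hz 0 (by simpa using h)
  have hz' : ∀ m : ℤ, (-z - n) ≠ m := by
    intro m h
    exact hz (-(m+n)) (by push_cast; linarith)
  have hG1 : Real.Gamma (z + 1) ≠ 0 := by
    apply Real.Gamma_ne_zero
    intro m h
    exact hz (-(m+1)) (by push_cast; linarith)
  have hG2 : Real.Gamma (-z - n + 1) ≠ 0 := by
    apply Real.Gamma_ne_zero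
    intro m h
    exact hz ((m:ℤ) - n + 1) (by push_cast; linarith)
  have key1 := gamma_shift4 z hz n
  have key2 := gamma_shift4 (-z - n) hz' n
  rw [show -z - (n:ℝ) + n + 1 = -z + 1 by ring] at key2
  set A := ∏ j ∈ Finset.range n, (z + 1 + (j:ℝ)) with hA
  set B := ∏ j ∈ Finset.range n, (-z - (n:ℝ) + 1 + (j:ℝ)) with hB
  have hBne : B ≠ 0 := by
    apply Finset.prod_ne_zero_iff.2
    intro j _ h
    exact hz ((j:ℤ) - n + 1) (by push_cast; linarith)
  have t1 : ∏ j ∈ Finset.range (n+1), (z + (j:ℝ)) = A * z := by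
    rw [Finset.prod_range_succ']
    simp only [Nat.cast_zero, add_zero]
    congr 1
    exact Finset.prod_congr rfl (fun j _ => by push_cast; ring)
  have t2 : ∏ j ∈ Finset.range (n+1), (z + (j:ℝ)) =
      (∏ j ∈ Finset.range n, (z + (j:ℝ))) * (z + n) := Finset.prod_range_succ _ _
  have hrefl := reflect_prod4 z n
  have hkey : A * z = (-1)^n * (z + n) * B := by
    rw [← t1, t2, hrefl]; ring
  rw [key1, key2]
  have e : Real.Gamma (z+1) * A / Real.Gamma (z+1) *
      (Real.Gamma (-z-(n:ℝ)+1) / (Real.Gamma (-z-(n:ℝ)+1) * B)) = A / B := by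
    field_simp
  rw [e, show (-1:ℝ)^n * ((z + n) / z) = ((-1)^n * (z + n)) / z by ring,
    div_eq_div_iff hBne hz0]
  linear_combination hkey

private lemma pair_general4 (z : ℝ) (hz : ∀ m : ℤ, z ≠ m) (a b : ℕ) :
    Real.Gamma (z + a - b + 1) / Real.Gamma (z + 1) *
      (Real.Gamma (-z + b - a + 1) / Real.Gamma (-z + 1)) =
    (-1)^(a+b) * ((z + a - b) / z) := by
  rcases le_or_gt b a with hba | hab
  · obtain ⟨n, rfl⟩ : ∃ n : ℕ, a = b + n := ⟨a - b, by omega⟩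
    rw [show z + (((b:ℕ) + n : ℕ):ℝ) - b + 1 = z + n + 1 by push_cast; ring,
      show -z + (b:ℝ) - (((b:ℕ) + n : ℕ):ℝ) + 1 = -z - n + 1 by push_cast; ring,
      pair_nat4 z hz n,
      show z + (((b:ℕ) + n : ℕ):ℝ) - b = z + n by push_cast; ring,
      show (b + n) + b = n + 2*b by ring, pow_add, pow_mul]
    norm_num
  · obtain ⟨n, rfl, hn⟩ : ∃ n : ℕ, b = a + n ∧ 0 < n := ⟨b - a, by omega, by omega⟩
    have hz' : ∀ m : ℤ, -z ≠ m := by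
      intro m h
      exact hz (-m) (by push_cast; linarith)
    have key := pair_nat4 (-z) hz' n
    rw [neg_neg] at key
    rw [show z + (a:ℝ) - (((a:ℕ) + n : ℕ):ℝ) + 1 = z - n + 1 by push_cast; ring,
      show -z + (((a:ℕ) + n : ℕ):ℝ) - a + 1 = -z + n + 1 by push_cast; ring,
      mul_comm, key,
      show z + (a:ℝ) - (((a:ℕ) + n : ℕ):ℝ) = z - n by push_cast; ring,
      show a + (a + n) = n + 2*a by ring, pow_add, pow_mul]
    have hz0 : z ≠ 0 := fun h => hz 0 (by simpa using h)
    rw [show (-z + (n:ℝ)) / (-z) = (z - n)/z by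
      rw [div_eq_div_iff (neg_ne_zero.2 hz0) hz0]; ring]
    norm_num

@[to_additive swap_sum4]
lemma swap_prod4 {k : ℕ} {M : Type*} [CommMonoid M] (g : Fin k × Fin k → M) :
    ∏ p ∈ Finset.univ.filter (fun p : Fin k × Fin k => p.1 < p.2), g p.swap =
    ∏ p ∈ Finset.univ.filter (fun p : Fin k × Fin k => p.2 < p.1), g p := by
  apply Finset.prod_bij (fun p _ => p.swap)
  · intro p hp
    simp only [Finset.mem_filter, Finset.mem_univ, true_and] at hp ⊢
    simpa using hp
  · intro p1 _ p2 _ h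
    exact Prod.swap_injective h
  · intro p hp
    refine ⟨p.swap, ?_, by simp⟩
    simp only [Finset.mem_filter, Finset.mem_univ, true_and] at hp ⊢
    simpa using hp
  · intro a _
    rfl

/-- Ratio of Gamma products identity (Lemma on Gamma ratios used for the
cohomological QDE solution). -/
theorem stmt4 (k : ℕ) (x : Fin k → ℝ) (ε : ℝ) (hε : ε ≠ 0) (d : Fin k → ℕ)
    (hx : ∀ i, x i ≠ 0)
    (hrat : ∀ i j, i ≠ j → ∀ m : ℤ, x i / ε - x j / ε ≠ (m : ℝ))
    (hΓ : ∀ b c : Fin k,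
      Real.Gamma (x c / ε - x b / ε + 1) ≠ 0 ∧
      Real.Gamma ((x c / ε + d c) - (x b / ε + d b) + 1) ≠ 0) :
    ∏ b : Fin k, ∏ c : Fin k,
        Real.Gamma ((x c / ε + d c) - (x b / ε + d b) + 1) /
          Real.Gamma (x c / ε - x b / ε + 1) =
      (-1 : ℝ) ^ ((k + 1) * ∑ i, d i) *
        ∏ p ∈ Finset.univ.filter (fun p : Fin k × Fin k => p.1 < p.2),
          ((x p.1 / ε + d p.1) - (x p.2 / ε + d p.2)) / (x p.1 / ε - x p.2 / ε) := by
  classical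
  set F : Fin k × Fin k → ℝ := fun p =>
    Real.Gamma ((x p.2 / ε + d p.2) - (x p.1 / ε + d p.1) + 1) /
      Real.Gamma (x p.2 / ε - x p.1 / ε + 1) with hF
  have hLHS : (∏ b : Fin k, ∏ c : Fin k,
      Real.Gamma ((x c / ε + d c) - (x b / ε + d b) + 1) /
        Real.Gamma (x c / ε - x b / ε + 1)) = ∏ p : Fin k × Fin k, F p := by
    rw [← Finset.prod_product']
    rfl
  rw [hLHS]
  -- split into diagonal, lower, upper
  have hsplit1 : (∏ p ∈ Finset.univ.filter (fun p : Fin k × Fin k => p.1 = p.2), F p) *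
      ∏ p ∈ Finset.univ.filter (fun p : Fin k × Fin k => ¬ p.1 = p.2), F p =
      ∏ p : Fin k × Fin k, F p :=
    Finset.prod_filter_mul_prod_filter_not _ _ _
  have hdiag : (∏ p ∈ Finset.univ.filter (fun p : Fin k × Fin k => p.1 = p.2), F p) = 1 := by
    apply Finset.prod_eq_one
    intro p hp
    obtain ⟨-, h⟩ := Finset.mem_filter.1 hp
    simp only [hF, h]
    rw [show (x p.2 / ε + d p.2) - (x p.2 / ε + d p.2) + 1 = 1 by ring,
      show x p.2 / ε - x p.2 / ε + 1 = 1 by ring, div_self]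
    rw [Real.Gamma_one]; exact one_ne_zero
  have huneq : Finset.univ.filter (fun p : Fin k × Fin k => ¬ p.1 = p.2) =
      Finset.univ.filter (fun p : Fin k × Fin k => p.1 < p.2) ∪
      Finset.univ.filter (fun p : Fin k × Fin k => p.2 < p.1) := by
    ext p
    simp only [Finset.mem_filter, Finset.mem_univ, true_and, Finset.mem_union]
    constructor
    · intro h; exact lt_or_gt_of_ne h
    · rintro (h | h)
      · exact ne_of_lt h
      · exact (ne_of_lt h).symm
  have hdisj : Disjoint (Finset.univ.filter (fun p : Fin k × Fin k => p.1 < p.2))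
      (Finset.univ.filter (fun p : Fin k × Fin k => p.2 < p.1)) := by
    rw [Finset.disjoint_left]
    intro p hp hp'
    simp only [Finset.mem_filter, Finset.mem_univ, true_and] at hp hp'
    exact absurd hp' (not_lt_of_gt hp)
  -- pair identity
  have hpair : ∀ p ∈ Finset.univ.filter (fun p : Fin k × Fin k => p.1 < p.2),
      F p * F p.swap = (-1:ℝ)^(d p.2 + d p.1) *
        (((x p.2 / ε + d p.2) - (x p.1 / ε + d p.1)) / (x p.2 / ε - x p.1 / ε)) := by
    intro p hp
    have hlt : p.1 < p.2 := (Finset.mem_filter.1 hp).2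
    have hne : p.2 ≠ p.1 := ne_of_gt hlt
    have hz : ∀ m : ℤ, (x p.2 / ε - x p.1 / ε) ≠ m := hrat p.2 p.1 hne
    have key := pair_general4 (x p.2 / ε - x p.1 / ε) hz (d p.2) (d p.1)
    have hz0 : x p.2 / ε - x p.1 / ε ≠ 0 := fun h => hz 0 (by simpa using h)
    simp only [hF, Prod.fst_swap, Prod.snd_swap]
    rw [show (x p.2 / ε + d p.2) - (x p.1 / ε + d p.1) + 1 =
        (x p.2 / ε - x p.1 / ε) + d p.2 - d p.1 + 1 by ring,
      show (x p.1 / ε + d p.1) - (x p.2 / ε + d p.2) + 1 =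
        -(x p.2 / ε - x p.1 / ε) + d p.1 - d p.2 + 1 by ring,
      show x p.1 / ε - x p.2 / ε + 1 = -(x p.2 / ε - x p.1 / ε) + 1 by ring,
      key,
      show (x p.2 / ε - x p.1 / ε) + d p.2 - d p.1 =
        (x p.2 / ε + d p.2) - (x p.1 / ε + d p.1) by ring]
  -- product over upper = product over lower of swapped
  have hswapP : ∏ p ∈ Finset.univ.filter (fun p : Fin k × Fin k => p.1 < p.2), F p.swap =
      ∏ p ∈ Finset.univ.filter (fun p : Fin k × Fin k => p.2 < p.1), F p := swap_prod4 F
  -- now the sum / sign computation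
  set S := ∑ i, d i with hS
  set N := ∑ p ∈ Finset.univ.filter (fun p : Fin k × Fin k => p.1 < p.2), (d p.2 + d p.1)
    with hN
  have hswapS : ∑ p ∈ Finset.univ.filter (fun p : Fin k × Fin k => p.1 < p.2), d p.2 =
      ∑ p ∈ Finset.univ.filter (fun p : Fin k × Fin k => p.2 < p.1), d p.1 := by
    have := swap_sum4 (k := k) (fun p => d p.1)
    simpa using this
  have htot : ∑ p : Fin k × Fin k, d p.1 = k * S := by
    rw [Fintype.sum_prod_type]
    simp [Finset.sum_const, mul_comm, hS, Finset.mul_sum]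
  have hdiagS : ∑ p ∈ Finset.univ.filter (fun p : Fin k × Fin k => p.1 = p.2), d p.1 = S := by
    rw [hS]
    apply Finset.sum_nbij' (i := fun p => p.1) (j := fun i => (i, i)) <;>
      simp +contextual [eq_comm]
  have hsplitS : (∑ p ∈ Finset.univ.filter (fun p : Fin k × Fin k => p.1 = p.2), d p.1) +
      ∑ p ∈ Finset.univ.filter (fun p : Fin k × Fin k => ¬ p.1 = p.2), d p.1 =
      ∑ p : Fin k × Fin k, d p.1 :=
    Finset.sum_filter_add_sum_filter_not _ _ _
  have huneqS : ∑ p ∈ Finset.univ.filter (fun p : Fin k × Fin k => ¬ p.1 = p.2), d p.1 =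
      (∑ p ∈ Finset.univ.filter (fun p : Fin k × Fin k => p.1 < p.2), d p.1) +
      ∑ p ∈ Finset.univ.filter (fun p : Fin k × Fin k => p.2 < p.1), d p.1 := by
    rw [huneq, Finset.sum_union hdisj]
  have hNval : N + S = k * S := by
    rw [hN, Finset.sum_add_distrib, hswapS, ← htot, ← hsplitS, huneqS, hdiagS]
    ring
  have hsign : ((-1:ℝ))^((k+1)*S) = (-1)^N := by
    have hk : (k+1)*S = N + 2*S := by
      have h1 : (k+1)*S = k*S + S := by ring
      rw [h1, ← hNval]; ring
    rw [hk, pow_add, pow_mul]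
    norm_num
  -- assemble
  rw [← hsplit1, hdiag, one_mul, huneq, Finset.prod_union hdisj, ← hswapP,
    ← Finset.prod_mul_distrib, Finset.prod_congr rfl hpair, Finset.prod_mul_distrib,
    Finset.prod_pow_eq_pow_sum, ← hN, hsign]
  congr 1
  apply Finset.prod_congr rfl
  intro p hp
  rw [← neg_div_neg_eq]
  congr 1 <;> ring
end

section
/- Let q with 0 < |q| < 1, let x_1, ..., x_k be nonzero complex numbers such that x_i/x_j is never an integer power of q for i ≠ j, and let d_1, ..., d_k be nonnegative integers. Set W(d) = ∏_{1 ≤ i < j ≤ k} (x_j − x_i)^{−1} (−x_j/x_i)^{d_j − d_i} q^{(d_j − d_i)(d_j − d_i − 1)/2 − d_i}. Then ∏_{1 ≤ i < j ≤ k} (x_j q^{d_j} − x_i q^{d_i}) = W(d)^{−1} · ∏_{b=1}^{k} ∏_{c=1}^{k} ((x_b/x_c) q; q)_∞ / ((x_b q^{d_b}/(x_c q^{d_c})) q; q)_∞. -/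
/-!
The factors with `b = c` of the double product equal `1`, and the factors for `(i, j)` and
`(j, i)` combine, with `r = x_j / x_i` and `e = d_j - d_i`, into
`(r q; q)_∞ (q / r; q)_∞ / ((r q^e q; q)_∞ (q / (r q^e); q)_∞)`.
Since `(1 - z) (z q; q)_∞ (q / z; q)_∞ = θ(z) := (z; q)_∞ (q / z; q)_∞` and `θ(z q) = -z⁻¹ θ(z)`,
iterating gives `θ(r q^e) (-r)^e q^(e(e-1)/2) = θ(r)`, so this quotient is
`(-r)^e q^(e(e-1)/2) (1 - r q^e) / (1 - r)`: exactly the `(i, j)` factor of `W(d)` times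
`x_j q^{d_j} - x_i q^{d_i}`.
-/

open Finset

noncomputable def qPochhammer (y q : ℂ) : ℂ := ∏' m : ℕ, (1 - y * q ^ m)

noncomputable def qTheta (z q : ℂ) : ℂ := qPochhammer z q * qPochhammer (z⁻¹ * q) q

section qPochhammer

variable {q : ℂ}

lemma summable_norm_neg_mul_pow (hq : ‖q‖ < 1) (y : ℂ) :
    Summable fun m : ℕ => ‖-(y * q ^ m)‖ := by
  simpa only [norm_neg, norm_mul, norm_pow] using
    (summable_geometric_of_lt_one (norm_nonneg q) hq).mul_left ‖y‖

lemma multipliable_one_sub_mul_pow (hq : ‖q‖ < 1) (y : ℂ) :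
    Multipliable fun m : ℕ => 1 - y * q ^ m := by
  simpa only [← sub_eq_add_neg] using
    multipliable_one_add_of_summable (summable_norm_neg_mul_pow hq y)

lemma qPochhammer_eq_one_sub_mul (hq : ‖q‖ < 1) (y : ℂ) :
    qPochhammer y q = (1 - y) * qPochhammer (y * q) q := by
  have hshift : (fun m : ℕ => 1 - y * q ^ (m + 1)) = fun m => 1 - y * q * q ^ m := by
    simp only [pow_succ', mul_assoc]
  rw [qPochhammer, tprod_eq_zero_mul' (by rw [hshift]; exact multipliable_one_sub_mul_pow hq _),
    hshift, pow_zero, mul_one, qPochhammer]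

lemma qPochhammer_ne_zero (hq : ‖q‖ < 1) {y : ℂ} (hy : ∀ m : ℕ, y * q ^ m ≠ 1) :
    qPochhammer y q ≠ 0 := by
  have := tprod_one_add_ne_zero_of_summable (f := fun m => -(y * q ^ m))
    (fun m => by rw [← sub_eq_add_neg, sub_ne_zero]; exact (hy m).symm)
    (summable_norm_neg_mul_pow hq y)
  rw [qPochhammer]
  simpa only [← sub_eq_add_neg] using this

lemma qTheta_mul_q (hq0 : q ≠ 0) (hq : ‖q‖ < 1) {z : ℂ} (hz : z ≠ 0) :
    qTheta (z * q) q = -z⁻¹ * qTheta z q := by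
  have hinv : (z * q)⁻¹ * q = z⁻¹ := by field_simp
  rw [qTheta, qTheta, hinv, qPochhammer_eq_one_sub_mul hq z,
    qPochhammer_eq_one_sub_mul hq z⁻¹]
  field_simp
  ring

lemma qTheta_mul_zpow (hq0 : q ≠ 0) (hq : ‖q‖ < 1) {z : ℂ} (hz : z ≠ 0) (e : ℤ) :
    qTheta (z * q ^ e) q * (-z) ^ e * q ^ (e * (e - 1) / 2) = qTheta z q := by
  set f : ℤ → ℂ := fun e => qTheta (z * q ^ e) q * (-z) ^ e * q ^ (e * (e - 1) / 2) with hf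
  have hexp : ∀ e : ℤ, (e + 1) * (e + 1 - 1) / 2 = e * (e - 1) / 2 + e := fun e => by
    rw [show (e + 1) * (e + 1 - 1) = e * (e - 1) + e * 2 by ring,
      Int.add_mul_ediv_right _ _ two_ne_zero]
  have step : ∀ e : ℤ, f (e + 1) = f e := fun e => by
    have hzq : z * q ^ e ≠ 0 := mul_ne_zero hz (zpow_ne_zero e hq0)
    simp only [hf, hexp, zpow_add₀ hq0, zpow_add₀ (neg_ne_zero.mpr hz), zpow_one, ← mul_assoc,
      qTheta_mul_q hq0 hq hzq]
    field_simp
  change f e = qTheta z q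
  induction e using Int.induction_on with
  | zero => simp [hf]
  | succ i ih => rw [step, ih]
  | pred i ih => rw [← step, sub_add_cancel, ih]

lemma qTheta_ne_zero (hq0 : q ≠ 0) (hq : ‖q‖ < 1) {z : ℂ} (hz : ∀ m : ℤ, z ≠ q ^ m) :
    qTheta z q ≠ 0 := by
  refine mul_ne_zero (qPochhammer_ne_zero hq fun m h => hz (-m) ?_)
    (qPochhammer_ne_zero hq fun m h => hz (m + 1) ?_)
  · rw [zpow_neg, zpow_natCast]
    exact eq_inv_of_mul_eq_one_left h
  · have hz0 : z ≠ 0 := by rintro rfl; simp at h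
    rw [mul_assoc, inv_mul_eq_one₀ hz0] at h
    rw [h, zpow_add_one₀ hq0, zpow_natCast, mul_comm]

lemma qPochhammer_div_mul_qPochhammer_div (hq0 : q ≠ 0) (hq : ‖q‖ < 1) {r : ℂ} (hr0 : r ≠ 0)
    (hr : ∀ m : ℤ, r ≠ q ^ m) (e : ℤ) :
    qPochhammer (r⁻¹ * q) q / qPochhammer ((r * q ^ e)⁻¹ * q) q *
        (qPochhammer (r * q) q / qPochhammer (r * q ^ e * q) q) =
      (-r) ^ e * q ^ (e * (e - 1) / 2) * (1 - r * q ^ e) / (1 - r) := by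
  set w := r * q ^ e with hw
  have hwq : ∀ m : ℤ, w ≠ q ^ m := fun m h => hr (m - e) (by
    rw [zpow_sub₀ hq0, ← h, hw, mul_div_cancel_right₀ _ (zpow_ne_zero e hq0)])
  have hθw := qTheta_ne_zero hq0 hq hwq
  have hr1 : 1 - r ≠ 0 := sub_ne_zero.mpr fun h => hr 0 (by rw [zpow_zero, h])
  have hθ := qTheta_mul_zpow hq0 hq hr0 e
  rw [← hw] at hθ
  rw [qTheta, qTheta, qPochhammer_eq_one_sub_mul hq w, qPochhammer_eq_one_sub_mul hq r] at hθ
  rw [qTheta, qPochhammer_eq_one_sub_mul hq w] at hθw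
  simp only [mul_ne_zero_iff] at hθw
  rw [div_mul_div_comm, div_eq_div_iff (mul_ne_zero hθw.2 hθw.1.2) hr1]
  linear_combination -hθ

lemma qPochhammer_pair_eq_weight_mul_sub (hq0 : q ≠ 0) (hq : ‖q‖ < 1) {a b : ℂ} (ha : a ≠ 0)
    (hb : b ≠ 0) (hba : ∀ m : ℤ, b / a ≠ q ^ m) (i j : ℕ) :
    qPochhammer (a / b * q) q / qPochhammer (a * q ^ i / (b * q ^ j) * q) q *
        (qPochhammer (b / a * q) q / qPochhammer (b * q ^ j / (a * q ^ i) * q) q) =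
      (b - a)⁻¹ * (-(b / a)) ^ ((j : ℤ) - i) *
          q ^ (((j : ℤ) - i) * ((j : ℤ) - i - 1) / 2 - i) *
        (b * q ^ j - a * q ^ i) := by
  have hqj : b * q ^ j / (a * q ^ i) = b / a * q ^ ((j : ℤ) - i) := by
    rw [zpow_sub₀ hq0, zpow_natCast, zpow_natCast, mul_div_mul_comm]
  have hne : b ≠ a := fun h => hba 0 (by rw [h, div_self ha, zpow_zero])
  have hab1 : a - b ≠ 0 := sub_ne_zero.mpr hne.symm
  rw [← inv_div b a, ← inv_div (b * q ^ j), hqj,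
    qPochhammer_div_mul_qPochhammer_div hq0 hq (div_ne_zero hb ha) hba]
  simp only [zpow_sub₀ hq0, zpow_natCast]
  field_simp
  ring

end qPochhammer

theorem Finset.prod_prod_eq_prod_diag_mul_prod_lt {ι M : Type*} [Fintype ι] [LinearOrder ι]
    [CommMonoid M] (f : ι → ι → M) :
    ∏ i, ∏ j, f i j =
      (∏ i, f i i) * ∏ p ∈ univ.filter (fun p : ι × ι => p.1 < p.2), f p.1 p.2 * f p.2 p.1 := by
  classical
  have hlt : univ.offDiag.filter (fun p : ι × ι => p.1 < p.2) =
      univ.filter (fun p : ι × ι => p.1 < p.2) := by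
    ext p; simpa using ne_of_lt
  have hgt : ∏ p ∈ univ.offDiag.filter (fun p : ι × ι => ¬ p.1 < p.2), f p.1 p.2 =
      ∏ p ∈ univ.filter (fun p : ι × ι => p.1 < p.2), f p.2 p.1 :=
    prod_nbij' Prod.swap Prod.swap (by simp +contextual [lt_iff_le_and_ne, le_of_not_gt, eq_comm])
      (by simp +contextual [le_of_lt, ne_of_gt]) (by simp) (by simp) (by simp)
  rw [← prod_product' (s := univ) (t := univ), ← diag_union_offDiag,
    prod_union (disjoint_diag_offDiag _), prod_diag,
    ← prod_filter_mul_prod_filter_not _ (fun p : ι × ι => p.1 < p.2), hlt, hgt,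
    prod_mul_distrib]

/-- Lemma 3.4 (q-Pochhammer/Vandermonde identity):
`∏_{i<j}(x_j q^{d_j} − x_i q^{d_i}) = W(d)⁻¹ ∏_{b,c} (x_b/x_c·q;q)_∞ / (x_b q^{d_b}/(x_c q^{d_c})·q;q)_∞`. -/
theorem stmt10 (k : ℕ) (q : ℂ) (hq0 : q ≠ 0) (hq : ‖q‖ < 1) (x : Fin k → ℂ)
    (hx : ∀ i, x i ≠ 0) (hrat : ∀ i j, i ≠ j → ∀ m : ℤ, x i / x j ≠ q ^ m)
    (d : Fin k → ℕ) :
    ∏ p ∈ Finset.univ.filter (fun p : Fin k × Fin k => p.1 < p.2),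
        (x p.2 * q ^ d p.2 - x p.1 * q ^ d p.1) =
      (∏ p ∈ Finset.univ.filter (fun p : Fin k × Fin k => p.1 < p.2),
          ((x p.2 - x p.1)⁻¹ * (-(x p.2 / x p.1)) ^ ((d p.2 : ℤ) - (d p.1 : ℤ)) *
            q ^ (((d p.2 : ℤ) - d p.1) * ((d p.2 : ℤ) - d p.1 - 1) / 2 - (d p.1 : ℤ))))⁻¹ *
        ∏ b : Fin k, ∏ c : Fin k,
          (∏' m : ℕ, (1 - (x b / x c) * q * q ^ m)) /
            (∏' m : ℕ, (1 - (x b * q ^ d b / (x c * q ^ d c)) * q * q ^ m)) := by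
  have hW : ∏ p ∈ Finset.univ.filter (fun p : Fin k × Fin k => p.1 < p.2),
      ((x p.2 - x p.1)⁻¹ * (-(x p.2 / x p.1)) ^ ((d p.2 : ℤ) - (d p.1 : ℤ)) *
        q ^ (((d p.2 : ℤ) - d p.1) * ((d p.2 : ℤ) - d p.1 - 1) / 2 - (d p.1 : ℤ))) ≠ 0 := by
    refine prod_ne_zero_iff.mpr fun p hp => ?_
    have hne : x p.2 ≠ x p.1 := fun h => hrat p.2 p.1 (mem_filter.mp hp).2.ne' 0 (by
      rw [h, div_self (hx _), zpow_zero])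
    exact mul_ne_zero (mul_ne_zero (inv_ne_zero (sub_ne_zero.mpr hne))
      (zpow_ne_zero _ (neg_ne_zero.mpr (div_ne_zero (hx _) (hx _))))) (zpow_ne_zero _ hq0)
  have hdiag (i : Fin k) :
      qPochhammer (x i / x i * q) q / qPochhammer (x i * q ^ d i / (x i * q ^ d i) * q) q = 1 := by
    rw [div_self (hx i), div_self (mul_ne_zero (hx i) (pow_ne_zero _ hq0))]
    refine div_self (qPochhammer_ne_zero hq fun m => ?_)
    rw [one_mul, ← pow_succ']
    intro h
    simpa [← norm_pow, h] using pow_lt_one₀ (norm_nonneg q) hq m.succ_ne_zero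
  simp only [← qPochhammer.eq_1]
  rw [prod_prod_eq_prod_diag_mul_prod_lt, prod_eq_one fun i _ => hdiag i, one_mul,
    prod_congr rfl fun p hp => qPochhammer_pair_eq_weight_mul_sub hq0 hq (hx _) (hx _)
      (hrat _ _ (mem_filter.mp hp).2.ne') _ _, eq_inv_mul_iff_mul_eq₀ hW]
  exact prod_mul_distrib.symm
end

section
/- Let R(u) be the 4 × 4 matrix (acting on ℂ² ⊗ ℂ² in the standard tensor basis) given by rows (1,0,0,0), (0,0,1,0), (0,1,u,0), (0,0,0,1). Then R satisfies the Yang–Baxter equation with additive spectral parameters: R_{a1}(u_1 − x) R_{a2}(u_2 − x) R_{12}(u_2 − u_1) = R_{12}(u_2 − u_1) R_{a2}(u_2 − x) R_{a1}(u_1 − x) as operators on ℂ² ⊗ ℂ² ⊗ ℂ², for all scalars x, u_1, u_2. -/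
open Matrix

/-- The cohomological R-matrix with rows (1,0,0,0),(0,0,1,0),(0,1,u,0),(0,0,0,1),
as a matrix on `ℂ² ⊗ ℂ²` indexed by `Fin 2 × Fin 2`. -/
noncomputable def Rcoh (u : ℂ) : Matrix (Fin 2 × Fin 2) (Fin 2 × Fin 2) ℂ :=
  fun p q =>
    if p = (0, 0) ∧ q = (0, 0) then 1
    else if p = (0, 1) ∧ q = (1, 0) then 1
    else if p = (1, 0) ∧ q = (0, 1) then 1
    else if p = (1, 0) ∧ q = (1, 0) then u
    else if p = (1, 1) ∧ q = (1, 1) then 1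
    else 0

/-- `R` acting on tensor factors `a` (first) and `1` (second) of `(ℂ²)^{⊗3}`. -/
noncomputable def Rcoh_a1 (t : ℂ) :
    Matrix (Fin 2 × Fin 2 × Fin 2) (Fin 2 × Fin 2 × Fin 2) ℂ :=
  fun p q => Rcoh t (p.1, p.2.1) (q.1, q.2.1) * (if p.2.2 = q.2.2 then 1 else 0)

/-- `R` acting on tensor factors `a` (first) and `2` (third) of `(ℂ²)^{⊗3}`. -/
noncomputable def Rcoh_a2 (t : ℂ) :
    Matrix (Fin 2 × Fin 2 × Fin 2) (Fin 2 × Fin 2 × Fin 2) ℂ :=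
  fun p q => Rcoh t (p.1, p.2.2) (q.1, q.2.2) * (if p.2.1 = q.2.1 then 1 else 0)

/-- `R` acting on tensor factors `1` (second) and `2` (third) of `(ℂ²)^{⊗3}`. -/
noncomputable def Rcoh_12 (t : ℂ) :
    Matrix (Fin 2 × Fin 2 × Fin 2) (Fin 2 × Fin 2 × Fin 2) ℂ :=
  fun p q => (if p.1 = q.1 then 1 else 0) * Rcoh t (p.2.1, p.2.2) (q.2.1, q.2.2)

@[simp] lemma Rcoh_0000 (u : ℂ) : Rcoh u (0, 0) (0, 0) = 1 := by
  simp [Rcoh, Prod.ext_iff]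

@[simp] lemma Rcoh_0001 (u : ℂ) : Rcoh u (0, 0) (0, 1) = 0 := by
  simp [Rcoh, Prod.ext_iff]

@[simp] lemma Rcoh_0010 (u : ℂ) : Rcoh u (0, 0) (1, 0) = 0 := by
  simp [Rcoh, Prod.ext_iff]

@[simp] lemma Rcoh_0011 (u : ℂ) : Rcoh u (0, 0) (1, 1) = 0 := by
  simp [Rcoh, Prod.ext_iff]

@[simp] lemma Rcoh_0100 (u : ℂ) : Rcoh u (0, 1) (0, 0) = 0 := by
  simp [Rcoh, Prod.ext_iff]

@[simp] lemma Rcoh_0101 (u : ℂ) : Rcoh u (0, 1) (0, 1) = 0 := by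
  simp [Rcoh, Prod.ext_iff]

@[simp] lemma Rcoh_0110 (u : ℂ) : Rcoh u (0, 1) (1, 0) = 1 := by
  simp [Rcoh, Prod.ext_iff]

@[simp] lemma Rcoh_0111 (u : ℂ) : Rcoh u (0, 1) (1, 1) = 0 := by
  simp [Rcoh, Prod.ext_iff]

@[simp] lemma Rcoh_1000 (u : ℂ) : Rcoh u (1, 0) (0, 0) = 0 := by
  simp [Rcoh, Prod.ext_iff]

@[simp] lemma Rcoh_1001 (u : ℂ) : Rcoh u (1, 0) (0, 1) = 1 := by
  simp [Rcoh, Prod.ext_iff]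

@[simp] lemma Rcoh_1010 (u : ℂ) : Rcoh u (1, 0) (1, 0) = u := by
  simp [Rcoh, Prod.ext_iff]

@[simp] lemma Rcoh_1011 (u : ℂ) : Rcoh u (1, 0) (1, 1) = 0 := by
  simp [Rcoh, Prod.ext_iff]

@[simp] lemma Rcoh_1100 (u : ℂ) : Rcoh u (1, 1) (0, 0) = 0 := by
  simp [Rcoh, Prod.ext_iff]

@[simp] lemma Rcoh_1101 (u : ℂ) : Rcoh u (1, 1) (0, 1) = 0 := by
  simp [Rcoh, Prod.ext_iff]

@[simp] lemma Rcoh_1110 (u : ℂ) : Rcoh u (1, 1) (1, 0) = 0 := by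
  simp [Rcoh, Prod.ext_iff]

@[simp] lemma Rcoh_1111 (u : ℂ) : Rcoh u (1, 1) (1, 1) = 1 := by
  simp [Rcoh, Prod.ext_iff]

set_option maxHeartbeats 1600000 in
/-- The additive Yang–Baxter equation for the cohomological R-matrix. -/
theorem stmt12 (x u₁ u₂ : ℂ) :
    Rcoh_a1 (u₁ - x) * Rcoh_a2 (u₂ - x) * Rcoh_12 (u₂ - u₁) =
      Rcoh_12 (u₂ - u₁) * Rcoh_a2 (u₂ - x) * Rcoh_a1 (u₁ - x) := by
  ext ⟨i, j, k⟩ ⟨l, m, n⟩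
  fin_cases i <;> fin_cases j <;> fin_cases k <;> fin_cases l <;> fin_cases m <;> fin_cases n <;>
    simp [Matrix.mul_apply, Fintype.sum_prod_type, Fin.sum_univ_two, Rcoh_a1, Rcoh_a2,
      Rcoh_12, Rcoh, Prod.ext_iff] <;> ring
end
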